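/- Separation of orbits by elementary 2-symmetric tropical polynomials: for v, w ∈ (ℝ²)ⁿ, if e_E(v) = e_E(w) for every nonzero 0/1-matrix E of size n×2 (where e_E(v) = min over permutations π ∈ Sₙ of Σ_{i=1}^n (E_{i,1}·x_{π(i)} + E_{i,2}·y_{π(i)}) for v = ((xᵢ,yᵢ))ᵢ), then w is obtained from v by permuting the n pairs. -/

import Mathlib

/-- The elementary 2-symmetric tropical polynomial attached to a 0/1 matrix
E : n×2, evaluated at v ∈ (ℝ²)ⁿ. -/
noncomputable def tropE2 {n : ℕ} (E : Fin n → ℕ × ℕ) (v : Fin n → ℝ × ℝ) : ℝ :=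
  (Finset.univ : Finset (Equiv.Perm (Fin n))).inf' Finset.univ_nonempty
    (fun π => ∑ i : Fin n,
      (((E i).1 : ℝ) * (v (π i)).1 + ((E i).2 : ℝ) * (v (π i)).2))


open Multiset in
/-- maximum of a multiset of reals (junk value 0 for the empty multiset) -/
noncomputable def mmax (K : Multiset ℝ) : ℝ :=
  if h : K = 0 then 0 else K.toFinset.max' (Multiset.toFinset_nonempty.mpr h)

lemma le_mmax {K : Multiset ℝ} {c : ℝ} (hc : c ∈ K) : c ≤ mmax K := by
  have hK : K ≠ 0 := by rintro rfl; simp at hc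
  rw [mmax, dif_neg hK]
  exact Finset.le_max' _ _ (Multiset.mem_toFinset.mpr hc)

lemma mmax_mem {K : Multiset ℝ} (hK : K ≠ 0) : mmax K ∈ K := by
  rw [mmax, dif_neg hK]
  exact Multiset.mem_toFinset.mp (Finset.max'_mem _ _)

lemma msum_map_sub (K : Multiset ℝ) (f g : ℝ → ℝ) :
    (K.map fun c => f c - g c).sum = (K.map f).sum - (K.map g).sum := by
  induction K using Multiset.induction_on with
  | empty => simp
  | cons a s ih => simp [ih]; ring

lemma msum_map_sub_const (K : Multiset ℝ) (Λ : ℝ) :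
    (K.map fun c => c - Λ).sum = K.sum - (K.card : ℝ) * Λ := by
  induction K using Multiset.induction_on with
  | empty => simp
  | cons a s ih => simp [ih]; ring

lemma msum_nonneg_eq_zero {K : Multiset ℝ} (h : ∀ x ∈ K, 0 ≤ x) (hs : K.sum = 0) :
    ∀ x ∈ K, x = 0 := by
  induction K using Multiset.induction_on with
  | empty => simp
  | cons a s ih =>
    rw [Multiset.sum_cons] at hs
    have ha : 0 ≤ a := h a (Multiset.mem_cons_self a s)
    have hss : 0 ≤ s.sum := Multiset.sum_nonneg fun x hx => h x (Multiset.mem_cons_of_mem hx)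
    have ha0 : a = 0 := by linarith
    intro x hx
    rcases Multiset.mem_cons.mp hx with rfl | hx
    · exact ha0
    · exact ih (fun y hy => h y (Multiset.mem_cons_of_mem hy)) (by linarith) x hx

/-- key one-dimensional lemma: sums of `min 0 (c - λ)` determine the max -/
lemma mmax_eq_of_hinge_sums (K1 K2 : Multiset ℝ) (hc : K1.card = K2.card)
    (h1 : K1 ≠ 0) (h2 : K2 ≠ 0)
    (h : ∀ l : ℝ, (K1.map fun c => min 0 (c - l)).sum = (K2.map fun c => min 0 (c - l)).sum) :
    mmax K1 = mmax K2 := by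
  -- sums are equal
  have hsum : K1.sum = K2.sum := by
    set Λ := max (mmax K1) (mmax K2) with hΛ
    have e1 : (K1.map fun c => min 0 (c - Λ)).sum = K1.sum - (K1.card : ℝ) * Λ := by
      rw [← msum_map_sub_const]
      refine congrArg _ (Multiset.map_congr rfl fun c hcK => ?_)
      have : c ≤ Λ := le_trans (le_mmax hcK) (le_max_left _ _)
      exact min_eq_right (by linarith)
    have e2 : (K2.map fun c => min 0 (c - Λ)).sum = K2.sum - (K2.card : ℝ) * Λ := by
      rw [← msum_map_sub_const]
      refine congrArg _ (Multiset.map_congr rfl fun c hcK => ?_)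
      have : c ≤ Λ := le_trans (le_mmax hcK) (le_max_right _ _)
      exact min_eq_right (by linarith)
    have := h Λ
    rw [e1, e2, hc] at this
    linarith
  -- generic step
  have step : ∀ (A B : Multiset ℝ), A.card = B.card → A ≠ 0 → B ≠ 0 → A.sum = B.sum →
      (∀ l : ℝ, (A.map fun c => min 0 (c - l)).sum = (B.map fun c => min 0 (c - l)).sum) →
      mmax A ≤ mmax B := by
    intro A B hcard hA hB hsum h
    set l := mmax B with hl
    have eB : (B.map fun c => min 0 (c - l)).sum = B.sum - (B.card : ℝ) * l := by
      rw [← msum_map_sub_const]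
      refine congrArg _ (Multiset.map_congr rfl fun c hcK => ?_)
      exact min_eq_right (by have := le_mmax hcK; linarith)
    have eA : (A.map fun c => min 0 (c - l)).sum = A.sum - (A.card : ℝ) * l := by
      rw [h l, eB, hsum, hcard]
    -- termwise : min 0 (c - l) ≤ c - l, sums equal ⟹ each equal
    have hzero : ∀ x ∈ A.map (fun c => (c - l) - min 0 (c - l)), x = 0 := by
      apply msum_nonneg_eq_zero
      · intro x hx
        obtain ⟨c, _, rfl⟩ := Multiset.mem_map.mp hx
        simp [sub_nonneg, min_le_right]
      · rw [msum_map_sub, msum_map_sub_const, eA]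
        ring
    have hm : mmax A ∈ A := mmax_mem hA
    have := hzero ((mmax A - l) - min 0 (mmax A - l)) (Multiset.mem_map_of_mem _ hm)
    have hle : min 0 (mmax A - l) ≤ 0 := min_le_left _ _
    linarith
  exact le_antisymm (step K1 K2 hc h1 h2 hsum h)
    (step K2 K1 hc.symm h2 h1 hsum.symm fun l => (h l).symm)

/-- the two-variable hinge sum attached to a multiset of points of ℝ² -/
noncomputable def GG (M : Multiset (ℝ × ℝ)) (l m : ℝ) : ℝ :=
  (M.map fun p => min (min 0 (p.1 - l)) (p.2 - m)).sum

open Classical in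
/-- Core reconstruction: the function `GG` determines the multiset. -/
lemma multiset_eq_of_GG (k : ℕ) : ∀ (M N : Multiset (ℝ × ℝ)), M.card = k → N.card = k →
    (∀ l m : ℝ, GG M l m = GG N l m) → M = N := by
  induction k with
  | zero =>
    intro M N hM hN _
    rw [Multiset.card_eq_zero] at hM hN; rw [hM, hN]
  | succ k ih =>
    intro M N hM hN hG
    have hMne : M ≠ 0 := by
      intro h; rw [h] at hM; simp at hM
    have hNne : N ≠ 0 := by
      intro h; rw [h] at hN; simp at hN
    -- the sections c_p(t) = min x (y + t)
    set Cc : Multiset (ℝ × ℝ) → ℝ → Multiset ℝ :=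
      fun P t => P.map (fun p => min p.1 (p.2 + t)) with hCc
    have hCcard : ∀ (P : Multiset (ℝ × ℝ)) t, (Cc P t).card = P.card := by
      intro P t; simp [hCc]
    have hCne : ∀ (P : Multiset (ℝ × ℝ)) t, P ≠ 0 → Cc P t ≠ 0 := by
      intro P t hP
      simp [hCc, Multiset.map_eq_zero]; exact hP
    have hGC : ∀ (P : Multiset (ℝ × ℝ)) (t l : ℝ),
        GG P l (l - t) = ((Cc P t).map fun c => min 0 (c - l)).sum := by
      intro P t l
      rw [hCc]
      rw [Multiset.map_map]
      refine congrArg _ (Multiset.map_congr rfl fun p _ => ?_)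
      show min (min 0 (p.1 - l)) (p.2 - (l - t)) = min 0 (min p.1 (p.2 + t) - l)
      have : min p.1 (p.2 + t) - l = min (p.1 - l) (p.2 + t - l) := by
        rcases le_total p.1 (p.2 + t) with hh | hh
        · rw [min_eq_left hh, min_eq_left (by linarith)]
        · rw [min_eq_right hh, min_eq_right (by linarith)]
      rw [this, ← min_assoc]
      congr 1
      · ring_nf
    have hF : ∀ t : ℝ, mmax (Cc M t) = mmax (Cc N t) := by
      intro t
      refine mmax_eq_of_hinge_sums _ _ (by rw [hCcard, hCcard, hM, hN]) (hCne M t hMne)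
        (hCne N t hNne) fun l => ?_
      rw [← hGC, ← hGC, hG]
    -- the maximal x coordinate
    set xh : Multiset (ℝ × ℝ) → ℝ := fun P => mmax (P.map Prod.fst) with hxh
    have hCx : ∀ (P : Multiset (ℝ × ℝ)) (t : ℝ), (∀ p ∈ P, p.1 - p.2 ≤ t) →
        Cc P t = P.map Prod.fst := by
      intro P t ht
      refine Multiset.map_congr rfl fun p hp => ?_
      have := ht p hp
      exact min_eq_left (by linarith)
    have hx : xh M = xh N := by
      set t := max (mmax (M.map fun p => p.1 - p.2)) (mmax (N.map fun p => p.1 - p.2)) with htdef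
      have e1 : Cc M t = M.map Prod.fst := by
        refine hCx M t fun p hp => ?_
        have h1 : p.1 - p.2 ≤ mmax (M.map fun q : ℝ × ℝ => q.1 - q.2) :=
          le_mmax (Multiset.mem_map_of_mem (fun q : ℝ × ℝ => q.1 - q.2) hp)
        exact le_trans h1 (le_max_left _ _)
      have e2 : Cc N t = N.map Prod.fst := by
        refine hCx N t fun p hp => ?_
        have h1 : p.1 - p.2 ≤ mmax (N.map fun q : ℝ × ℝ => q.1 - q.2) :=
          le_mmax (Multiset.mem_map_of_mem (fun q : ℝ × ℝ => q.1 - q.2) hp)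
        exact le_trans h1 (le_max_right _ _)
      have := hF t
      rwa [e1, e2] at this
    -- the maximal y coordinate on the fiber of xh
    set yh : Multiset (ℝ × ℝ) → ℝ :=
      fun P => mmax ((P.filter (fun p => p.1 = xh P)).map Prod.snd) with hyh
    have hfib : ∀ (P : Multiset (ℝ × ℝ)), P ≠ 0 → (xh P, yh P) ∈ P := by
      intro P hP
      have hxmem : xh P ∈ P.map Prod.fst := mmax_mem (by simp [Multiset.map_eq_zero]; exact hP)
      obtain ⟨q, hq, hq1⟩ := Multiset.mem_map.mp hxmem
      have hfibne : (P.filter (fun p => p.1 = xh P)).map Prod.snd ≠ 0 := by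
        simp only [ne_eq, Multiset.map_eq_zero, Multiset.filter_eq_nil]
        push_neg
        exact ⟨q, hq, hq1⟩
      have hymem : yh P ∈ (P.filter (fun p => p.1 = xh P)).map Prod.snd := mmax_mem hfibne
      obtain ⟨p, hp, hp2⟩ := Multiset.mem_map.mp hymem
      have hp' := Multiset.mem_filter.mp hp
      have : p = (xh P, yh P) := Prod.ext hp'.2 hp2
      rw [← this]; exact hp'.1
    have hyle : ∀ p ∈ M, p.1 = xh M → p.2 ≤ yh M := by
      intro p hp hp1
      exact le_mmax (Multiset.mem_map_of_mem _ (Multiset.mem_filter.mpr ⟨hp, hp1⟩))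
    have hyleN : ∀ p ∈ N, p.1 = xh N → p.2 ≤ yh N := by
      intro p hp hp1
      exact le_mmax (Multiset.mem_map_of_mem _ (Multiset.mem_filter.mpr ⟨hp, hp1⟩))
    -- key antisymmetry step for yh
    have hystep : ∀ (P Q : Multiset (ℝ × ℝ)), P ≠ 0 → Q ≠ 0 →
        (∀ t : ℝ, mmax (Cc P t) = mmax (Cc Q t)) → xh P = xh Q →
        (∀ p ∈ P, p.1 = xh P → p.2 ≤ yh P) → (xh Q, yh Q) ∈ Q →
        yh Q ≤ yh P := by
      intro P Q hP hQ hFt hxPQ hylP hfibQ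
      set τ := xh Q - yh Q with hτ
      have hQτ : mmax (Cc Q τ) = xh Q := by
        apply le_antisymm
        · obtain ⟨p, hp, hpe⟩ := Multiset.mem_map.mp (mmax_mem (hCne Q τ hQ))
          rw [← hpe]
          exact le_trans (min_le_left _ _) (le_mmax (Multiset.mem_map_of_mem _ hp))
        · have : min (xh Q) (yh Q + τ) ∈ Cc Q τ := Multiset.mem_map_of_mem _ hfibQ
          have he : min (xh Q) (yh Q + τ) = xh Q := by rw [hτ]; simp
          rw [he] at this
          exact le_mmax this
      have hPτ : mmax (Cc P τ) = xh Q := by rw [hFt τ, hQτ]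
      obtain ⟨p, hp, hpe⟩ := Multiset.mem_map.mp (mmax_mem (hCne P τ hP))
      rw [hPτ] at hpe
      -- p ∈ P with min p.1 (p.2 + τ) = xh Q = xh P
      have h1 : xh Q ≤ p.1 := by rw [← hpe]; exact min_le_left _ _
      have h2 : xh Q ≤ p.2 + τ := by rw [← hpe]; exact min_le_right _ _
      have h3 : p.1 ≤ xh P := le_mmax (Multiset.mem_map_of_mem _ hp)
      have h4 : p.1 = xh P := le_antisymm h3 (by rw [hxPQ]; exact h1)
      have h5 : p.2 ≤ yh P := hylP p hp h4
      rw [hτ] at h2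
      linarith
    have hy : yh M = yh N := by
      refine le_antisymm (hystep N M hNne hMne (fun t => (hF t).symm) hx.symm hyleN
        (hfib M hMne)) (hystep M N hMne hNne hF hx hyle (hfib N hNne))
    -- extract the common point and induct
    have hpM : (xh M, yh M) ∈ M := hfib M hMne
    have hpN : (xh M, yh M) ∈ N := by rw [hx, hy]; exact hfib N hNne
    set p0 : ℝ × ℝ := (xh M, yh M) with hp0
    have hMe : M = p0 ::ₘ M.erase p0 := (Multiset.cons_erase hpM).symm
    have hNe : N = p0 ::ₘ N.erase p0 := (Multiset.cons_erase hpN).symm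
    have hGG' : ∀ l m : ℝ, GG (M.erase p0) l m = GG (N.erase p0) l m := by
      intro l m
      have h1 : GG M l m = min (min 0 (p0.1 - l)) (p0.2 - m) + GG (M.erase p0) l m := by
        rw [GG]
        conv_lhs => rw [hMe]
        rw [Multiset.map_cons, Multiset.sum_cons]; rfl
      have h2 : GG N l m = min (min 0 (p0.1 - l)) (p0.2 - m) + GG (N.erase p0) l m := by
        rw [GG]
        conv_lhs => rw [hNe]
        rw [Multiset.map_cons, Multiset.sum_cons]; rfl
      have := hG l m
      rw [h1, h2] at this
      linarith
    have hcM : (M.erase p0).card = k := by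
      rw [Multiset.card_erase_of_mem hpM, hM]; rfl
    have hcN : (N.erase p0).card = k := by
      rw [Multiset.card_erase_of_mem hpN, hN]; rfl
    have := ih (M.erase p0) (N.erase p0) hcM hcN hGG'
    rw [hMe, hNe, this]



noncomputable def gg {n : ℕ} (v : Fin n → ℝ × ℝ) (l m : ℝ) : ℝ :=
  ∑ i : Fin n, min (min 0 ((v i).1 - l)) ((v i).2 - m)

lemma gg_le {n : ℕ} (v w : Fin n → ℝ × ℝ)
    (h : ∀ E : Fin n → ℕ × ℕ,
      (∀ i, (E i).1 ≤ 1 ∧ (E i).2 ≤ 1) → (∃ i, E i ≠ (0, 0)) →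
      tropE2 E v = tropE2 E w) (l m : ℝ) : gg v l m ≤ gg w l m := by
  classical
  set gt : ℝ × ℝ → ℝ := fun p => min (min 0 (p.1 - l)) (p.2 - m) with hgt
  set E : Fin n → ℕ × ℕ := fun j =>
    if (w j).1 - l ≤ min 0 ((w j).2 - m) then (1, 0)
    else if (w j).2 - m ≤ 0 then (0, 1) else (0, 0) with hE
  have hrow : ∀ j, E j = (1, 0) ∨ E j = (0, 1) ∨ E j = (0, 0) := by
    intro j; rw [hE]; dsimp only; split_ifs <;> simp
  have hEw : ∀ j, ((E j).1 : ℝ) * (w j).1 + ((E j).2 : ℝ) * (w j).2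
      = gt (w j) + l * (E j).1 + m * (E j).2 := by
    intro j
    rw [hE, hgt]; dsimp only
    split_ifs with h1 h2
    · have h0 : (w j).1 - l ≤ 0 := le_trans h1 (min_le_left _ _)
      have h2 : (w j).1 - l ≤ (w j).2 - m := le_trans h1 (min_le_right _ _)
      rw [min_eq_right h0, min_eq_left h2]
      push_cast; ring
    · have h3 : (w j).2 - m ≤ min 0 ((w j).1 - l) := by
        have h4 : min 0 ((w j).2 - m) = (w j).2 - m := min_eq_right h2
        rw [h4] at h1
        push_neg at h1
        exact le_min h2 (le_of_lt h1)
      have hmin : (0 : ℝ) ⊓ ((w j).1 - l) ⊓ ((w j).2 - m) = (w j).2 - m := by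
        rw [min_comm]; exact min_eq_left h3
      rw [hmin]; push_cast; ring
    · push_neg at h1 h2
      have h4 : min 0 ((w j).2 - m) = 0 := min_eq_left (le_of_lt h2)
      rw [h4] at h1
      have h5 : min 0 ((w j).1 - l) = 0 := min_eq_left (le_of_lt h1)
      rw [h5, min_eq_left (le_of_lt h2)]
      push_cast; ring
  have hge : ∀ (e : ℕ × ℕ), (e = (1, 0) ∨ e = (0, 1) ∨ e = (0, 0)) → ∀ p : ℝ × ℝ,
      gt p + l * e.1 + m * e.2 ≤ (e.1 : ℝ) * p.1 + (e.2 : ℝ) * p.2 := by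
    rintro e (rfl | rfl | rfl) p <;> rw [hgt] <;> dsimp only <;> push_cast
    · have : min (min 0 (p.1 - l)) (p.2 - m) ≤ p.1 - l :=
        le_trans (min_le_left _ _) (min_le_right _ _)
      linarith
    · have : min (min 0 (p.1 - l)) (p.2 - m) ≤ p.2 - m := min_le_right _ _
      linarith
    · have : min (min 0 (p.1 - l)) (p.2 - m) ≤ 0 :=
        le_trans (min_le_left _ _) (min_le_left _ _)
      linarith
  by_cases hEz : ∀ j, E j = (0, 0)
  · -- all labels zero : gg w = 0 and gg v ≤ 0
    have hw0 : ∀ j, gt (w j) = 0 := by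
      intro j
      have := hEz j
      rw [hE] at this; dsimp only at this
      split_ifs at this with h1 h2
      · simp at this
      · simp at this
      · push_neg at h1 h2
        rw [hgt]; dsimp only
        have h4 : min 0 ((w j).2 - m) = 0 := min_eq_left (le_of_lt h2)
        rw [h4] at h1
        have h5 : min 0 ((w j).1 - l) = 0 := min_eq_left (le_of_lt h1)
        rw [h5, min_eq_left (le_of_lt h2)]
    have hwg : gg w l m = 0 := by
      rw [gg]
      exact Finset.sum_eq_zero fun j _ => hw0 j
    have hvg : gg v l m ≤ 0 := by
      rw [gg]
      refine Finset.sum_nonpos fun j _ => ?_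
      exact le_trans (min_le_left _ _) (min_le_left _ _)
    rw [hwg]; exact hvg
  · push_neg at hEz
    have hE1 : ∀ i, (E i).1 ≤ 1 ∧ (E i).2 ≤ 1 := by
      intro i
      rcases hrow i with h' | h' | h' <;> rw [h'] <;> exact ⟨by norm_num, by norm_num⟩
    have htrop := h E hE1 hEz
    set a : ℝ := ∑ i : Fin n, ((E i).1 : ℝ) with ha
    set b : ℝ := ∑ i : Fin n, ((E i).2 : ℝ) with hb
    have step1 : gg v l m + l * a + m * b ≤ tropE2 E v := by
      rw [tropE2]
      refine Finset.le_inf' _ _ fun π _ => ?_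
      have hgv : gg v l m = ∑ i : Fin n, gt (v (π i)) := by
        rw [gg]
        exact (Equiv.sum_comp π (fun j => gt (v j))).symm
      have expand : gg v l m + l * a + m * b
          = ∑ i : Fin n, (gt (v (π i)) + l * (E i).1 + m * (E i).2) := by
        rw [hgv, ha, hb, Finset.mul_sum, Finset.mul_sum, ← Finset.sum_add_distrib,
          ← Finset.sum_add_distrib]
      rw [expand]
      exact Finset.sum_le_sum fun i _ => hge (E i) (hrow i) (v (π i))
    have step2 : tropE2 E w ≤ ∑ i : Fin n, (((E i).1 : ℝ) * (w i).1 + ((E i).2 : ℝ) * (w i).2) := by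
      rw [tropE2]
      have := Finset.inf'_le (s := (Finset.univ : Finset (Equiv.Perm (Fin n))))
        (fun π => ∑ i : Fin n, (((E i).1 : ℝ) * (w (π i)).1 + ((E i).2 : ℝ) * (w (π i)).2))
        (Finset.mem_univ (1 : Equiv.Perm (Fin n)))
      exact this.trans (by simp)
    have step3 : ∑ i : Fin n, (((E i).1 : ℝ) * (w i).1 + ((E i).2 : ℝ) * (w i).2)
        = gg w l m + l * a + m * b := by
      rw [gg, ha, hb, Finset.mul_sum, Finset.mul_sum, ← Finset.sum_add_distrib,
        ← Finset.sum_add_distrib]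
      exact Finset.sum_congr rfl fun i _ => by rw [hEw i]
    rw [step3] at step2
    have := le_trans step1 (le_of_eq htrop)
    linarith [le_trans this step2]

lemma gg_eq_GG {n : ℕ} (v : Fin n → ℝ × ℝ) (l m : ℝ) :
    gg v l m = GG (Finset.univ.val.map v) l m := by
  rw [GG, Multiset.map_map, gg]
  rfl

/-- The elementary 2-symmetric tropical polynomials separate the orbits of the
block-permutation action of Sₙ on (ℝ²)ⁿ. -/
theorem tropE2_separates_orbits {n : ℕ} (v w : Fin n → ℝ × ℝ)
    (h : ∀ E : Fin n → ℕ × ℕ,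
      (∀ i, (E i).1 ≤ 1 ∧ (E i).2 ≤ 1) → (∃ i, E i ≠ (0, 0)) →
      tropE2 E v = tropE2 E w) :
    ∃ π : Equiv.Perm (Fin n), w = v ∘ π := by
  have hg : ∀ l m : ℝ, gg v l m = gg w l m := fun l m =>
    le_antisymm (gg_le v w h l m) (gg_le w v (fun E hE hne => (h E hE hne).symm) l m)
  have hmult : Finset.univ.val.map v = Finset.univ.val.map w := by
    refine multiset_eq_of_GG n _ _ (by simp) (by simp) fun l m => ?_
    rw [← gg_eq_GG, ← gg_eq_GG, hg]
  rw [Fin.univ_val_map, Fin.univ_val_map, Multiset.coe_eq_coe] at hmult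
  -- sort both tuples in the lexicographic order
  set v' : Fin n → ℝ ×ₗ ℝ := fun i => toLex (v i) with hv'
  set w' : Fin n → ℝ ×ₗ ℝ := fun i => toLex (w i) with hw'
  have hp' : (List.ofFn v').Perm (List.ofFn w') := by
    have h1 : List.ofFn v' = (List.ofFn v).map toLex := by
      rw [List.map_ofFn]; rfl
    have h2 : List.ofFn w' = (List.ofFn w).map toLex := by
      rw [List.map_ofFn]; rfl
    rw [h1, h2]
    exact hmult.map _
  set σ := Tuple.sort v' with hσ
  set τ := Tuple.sort w' with hτ
  have hperm : (List.ofFn (v' ∘ σ)).Perm (List.ofFn (w' ∘ τ)) :=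
    (σ.ofFn_comp_perm v').trans (hp'.trans (τ.ofFn_comp_perm w').symm)
  have heq : v' ∘ σ = w' ∘ τ :=
    List.ofFn_injective (List.Perm.eq_of_sortedLE
      (Tuple.monotone_sort v').sortedLE_ofFn (Tuple.monotone_sort w').sortedLE_ofFn hperm)
  refine ⟨(τ⁻¹ : Equiv.Perm (Fin n)).trans σ, funext fun j => ?_⟩
  have : v' (σ (τ⁻¹ j)) = w' (τ (τ⁻¹ j)) := congrFun heq (τ⁻¹ j)
  rw [show τ (τ⁻¹ j) = j by simp] at this
  have := congrArg ofLex this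
  simpa [hv', hw'] using this.symm
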